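/- For fixed x₀ ∈ R_p⁺, the fundamental solution q₄(x,x₀) = k₄ (r²)^{−1+α+β−p/2} x₁^{1−2α} x_{01}^{1−2α} x₂^{1−2β} x_{02}^{1−2β} · A₂(1−α−β+p/2; 1−α, 1−β; 2−2α, 2−2β; ξ, η, ζ) satisfies the boundary conditions q₄ = 0 on the hyperplane x₁ = 0 and q₄ = 0 on the hyperplane x₂ = 0 (at points of those hyperplanes distinct from x₀, where the remaining coordinates keep q₄ defined). -/
import Mathlib


/-- Partial derivative of `f : ℝᵖ → ℝ` in the `i`-th coordinate direction. -/
noncomputable def pd {p : ℕ} (i : Fin p) (f : (Fin p → ℝ) → ℝ) : (Fin p → ℝ) → ℝ :=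
  fun x => fderiv ℝ f x (Pi.single i 1)

/-- The domain `R_p⁺ = {x ∈ ℝᵖ : x₁ > 0, x₂ > 0}`. -/
def Rplus (p : ℕ) [NeZero p] : Set (Fin p → ℝ) := {x | 0 < x 0 ∧ 0 < x 1}

/-- The generalized bi-axially symmetric Helmholtz operator
`H^{p,λ}_{α,β}(u) = Σᵢ ∂²u/∂xᵢ² + (2α/x₁) ∂u/∂x₁ + (2β/x₂) ∂u/∂x₂ − λ²u`. -/
noncomputable def Hop (p : ℕ) [NeZero p] (α β lam : ℝ) (f : (Fin p → ℝ) → ℝ) :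
    (Fin p → ℝ) → ℝ :=
  fun x => (∑ i : Fin p, pd i (pd i f) x)
    + (2 * α / x 0) * pd 0 f x + (2 * β / x 1) * pd 1 f x - lam ^ 2 * f x

/-- `r² = Σᵢ (xᵢ − x₀ᵢ)²`. -/
noncomputable def r2 {p : ℕ} (x0 x : Fin p → ℝ) : ℝ := ∑ i, (x i - x0 i) ^ 2

/-- `ξ = −4x₁x₀₁/r²`. -/
noncomputable def xiF {p : ℕ} [NeZero p] (x0 x : Fin p → ℝ) : ℝ :=
  -(4 * x 0 * x0 0) / r2 x0 x

/-- `η = −4x₂x₀₂/r²`. -/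
noncomputable def etaF {p : ℕ} [NeZero p] (x0 x : Fin p → ℝ) : ℝ :=
  -(4 * x 1 * x0 1) / r2 x0 x

/-- `ζ = −λ²r²/4`. -/
noncomputable def zetaF {p : ℕ} (lam : ℝ) (x0 x : Fin p → ℝ) : ℝ :=
  -(lam ^ 2 * r2 x0 x) / 4

/-- Pochhammer symbol `(a)_ν = Γ(a+ν)/Γ(a)`, extended to integer subscripts
via the Gamma-function ratio. -/
noncomputable def pochR (a : ℝ) (ν : ℤ) : ℝ := Real.Gamma (a + ν) / Real.Gamma a

/-- The confluent hypergeometric function of three (real) variables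
`A₂(a;b₁,b₂;c₁,c₂;x,y,z)`. -/
noncomputable def A2R (a b1 b2 c1 c2 x y z : ℝ) : ℝ :=
  ∑' m : ℕ × ℕ × ℕ,
    pochR a ((m.1 : ℤ) + (m.2.1 : ℤ) - (m.2.2 : ℤ)) * pochR b1 (m.1 : ℤ) * pochR b2 (m.2.1 : ℤ) /
      (pochR c1 (m.1 : ℤ) * pochR c2 (m.2.1 : ℤ) * (m.1.factorial : ℝ) *
        (m.2.1.factorial : ℝ) * (m.2.2.factorial : ℝ)) *
      x ^ m.1 * y ^ m.2.1 * z ^ m.2.2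

/-- Property (3.25): `q₄ = 0` on the hyperplane `x₁ = 0` and `q₄ = 0`
on the hyperplane `x₂ = 0` (at points distinct from `x₀`). -/
theorem q4_boundary (p : ℕ) [NeZero p] (hp : 2 < p) (α β lam : ℝ)
    (hα0 : 0 < 2 * α) (hα1 : 2 * α < 1) (hβ0 : 0 < 2 * β) (hβ1 : 2 * β < 1)
    (x0 : Fin p → ℝ) (hx0 : x0 ∈ Rplus p) (k : ℝ)
    (q : (Fin p → ℝ) → ℝ)
    (hq : q = fun y =>
      k * r2 x0 y ^ (-1 + α + β - (p : ℝ) / 2) *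
        y 0 ^ (1 - 2 * α) * x0 0 ^ (1 - 2 * α) *
        y 1 ^ (1 - 2 * β) * x0 1 ^ (1 - 2 * β) *
        A2R (1 - α - β + (p : ℝ) / 2) (1 - α) (1 - β) (2 - 2 * α) (2 - 2 * β)
          (xiF x0 y) (etaF x0 y) (zetaF lam x0 y)) :
    (∀ x : Fin p → ℝ, x 0 = 0 → x ≠ x0 → q x = 0) ∧
    (∀ x : Fin p → ℝ, x 1 = 0 → x ≠ x0 → q x = 0) := by
  subst hq
  constructor
  · intro x hx _
    simp only
    rw [hx, Real.zero_rpow (by linarith)]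
    ring
  · intro x hx _
    simp only
    rw [hx, Real.zero_rpow (by linarith)]
    ring
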